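/- arXiv:1901.07635 — 2 statements merged into one kernel-verified Lean document; each statement's English description precedes it below -/
import Mathlib

section
/- For any integer ℓ ≥ 2, define λ_T(ℓ) = inf over 0 < x < 1 of (-ln(1 - x^{1/(ℓ-1)}))/x. If 0 < λ < λ_T(ℓ), then the only solution p ∈ [0,1) of the fixed-point equation p = (1 - exp(-λ p))^{ℓ-1} is p = 0. -/
/-- For ℓ ≥ 2 and 0 < λ < λ_T(ℓ) := inf_{0<x<1} (-ln(1 - x^{1/(ℓ-1)}))/x, the only
solution p ∈ [0,1) of p = (1 - e^{-λp})^{ℓ-1} is p = 0. -/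
theorem stmt_6 (ℓ : ℕ) (hℓ : 2 ≤ ℓ) (lam : ℝ) (hlam : 0 < lam)
    (hlt : lam < sInf ((fun x : ℝ =>
      -Real.log (1 - x ^ ((1 : ℝ) / ((ℓ : ℝ) - 1))) / x) '' Set.Ioo 0 1)) :
    ∀ p : ℝ, 0 ≤ p → p < 1 →
      p = (1 - Real.exp (-lam * p)) ^ (ℓ - 1) → p = 0 := by
  intro p hp0 hp1 heq
  by_contra hne
  have hp_pos : 0 < p := lt_of_le_of_ne hp0 (Ne.symm hne)
  set t : ℝ := 1 - Real.exp (-lam * p) with ht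
  have ht_pos : 0 < t := by
    have : Real.exp (-lam * p) < 1 := by
      rw [Real.exp_lt_one_iff]; nlinarith
    linarith
  have hcast : ((ℓ - 1 : ℕ) : ℝ) = (ℓ : ℝ) - 1 := by
    have : 1 ≤ ℓ := by omega
    push_cast [this]; ring
  have hℓpos : (0 : ℝ) < (ℓ : ℝ) - 1 := by
    have : (2 : ℝ) ≤ (ℓ : ℝ) := by exact_mod_cast hℓ
    linarith
  have hrpow : p ^ ((1 : ℝ) / ((ℓ : ℝ) - 1)) = t := by
    rw [heq, ← Real.rpow_natCast t (ℓ - 1), ← Real.rpow_mul ht_pos.le, hcast,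
      mul_one_div, div_self hℓpos.ne', Real.rpow_one]
  have hkey : -Real.log (1 - p ^ ((1 : ℝ) / ((ℓ : ℝ) - 1))) / p = lam := by
    rw [hrpow]
    have : (1 : ℝ) - t = Real.exp (-lam * p) := by rw [ht]; ring
    rw [this, Real.log_exp]
    field_simp
  have hmem : lam ∈ ((fun x : ℝ =>
      -Real.log (1 - x ^ ((1 : ℝ) / ((ℓ : ℝ) - 1))) / x) '' Set.Ioo 0 1) :=
    ⟨p, ⟨hp_pos, hp1⟩, hkey⟩
  have hbdd : BddBelow ((fun x : ℝ =>
      -Real.log (1 - x ^ ((1 : ℝ) / ((ℓ : ℝ) - 1))) / x) '' Set.Ioo 0 1) := by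
    refine ⟨0, ?_⟩
    rintro y ⟨x, ⟨hx0, hx1⟩, rfl⟩
    have hxe : (0 : ℝ) ≤ x ^ ((1 : ℝ) / ((ℓ : ℝ) - 1)) := Real.rpow_nonneg hx0.le _
    have hxe1 : x ^ ((1 : ℝ) / ((ℓ : ℝ) - 1)) < 1 :=
      Real.rpow_lt_one hx0.le hx1 (by positivity)
    have hlog : Real.log (1 - x ^ ((1 : ℝ) / ((ℓ : ℝ) - 1))) ≤ 0 :=
      Real.log_nonpos (by linarith) (by linarith)
    exact div_nonneg (by linarith) hx0.le
  have := csInf_le hbdd hmem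
  linarith
end

section
/- Fix ℓ ≥ 2 and λ with 0 < λ < λ_T(ℓ), where λ_T(ℓ) = inf_{0<x<1} (-ln(1-x^{1/(ℓ-1)}))/x. Then the sequence defined by p₁ = 1, p_{j+1} = (1 - exp(-λ p_j))^{ℓ-1} converges to 0. -/
open Real Filter Set

/-- For ℓ ≥ 2 and 0 < λ < λ_T(ℓ), the density evolution sequence converges to 0. -/
theorem stmt_9 (ℓ : ℕ) (hℓ : 2 ≤ ℓ) (lam : ℝ) (hlam : 0 < lam)
    (hlt : lam < sInf ((fun x : ℝ =>
      -Real.log (1 - x ^ ((1 : ℝ) / ((ℓ : ℝ) - 1))) / x) '' Set.Ioo 0 1))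
    (p : ℕ → ℝ) (hp0 : p 0 = 1)
    (hrec : ∀ j, p (j + 1) = (1 - Real.exp (-lam * p j)) ^ (ℓ - 1)) :
    Filter.Tendsto p Filter.atTop (nhds 0) := by
  set k := ℓ - 1 with hkdef
  have hk1 : 1 ≤ k := by omega
  have hkcast : ((ℓ : ℝ) - 1) = (k : ℝ) := by
    have : (ℓ : ℝ) = ((k + 1 : ℕ) : ℝ) := by norm_cast; omega
    rw [this]; push_cast; ring
  have hkpos : (0 : ℝ) < (k : ℝ) := by positivity
  set f : ℝ → ℝ := fun x => (1 - Real.exp (-lam * x)) ^ k with hfdef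
  -- the set in the inf is bounded below by 0
  have hbdd : BddBelow ((fun x : ℝ =>
      -Real.log (1 - x ^ ((1 : ℝ) / ((ℓ : ℝ) - 1))) / x) '' Set.Ioo 0 1) := by
    refine ⟨0, ?_⟩
    rintro v ⟨x, ⟨hx0, hx1⟩, rfl⟩
    have hy1 : x ^ ((1 : ℝ) / ((ℓ : ℝ) - 1)) < 1 := by
      rw [hkcast]
      exact Real.rpow_lt_one (le_of_lt hx0) hx1 (by positivity)
    have hy0' : 0 ≤ x ^ ((1 : ℝ) / ((ℓ : ℝ) - 1)) := Real.rpow_nonneg (le_of_lt hx0) _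
    have : Real.log (1 - x ^ ((1 : ℝ) / ((ℓ : ℝ) - 1))) ≤ 0 :=
      Real.log_nonpos (by linarith) (by linarith)
    have : 0 ≤ -Real.log (1 - x ^ ((1 : ℝ) / ((ℓ : ℝ) - 1))) := by linarith
    positivity
  -- key: f x < x on (0,1)
  have hkey : ∀ x ∈ Set.Ioo (0:ℝ) 1, f x < x := by
    rintro x ⟨hx0, hx1⟩
    set y := x ^ ((1 : ℝ) / ((ℓ : ℝ) - 1)) with hy
    have hy0 : 0 < y := Real.rpow_pos_of_pos hx0 _
    have hy1 : y < 1 := by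
      rw [hy, hkcast]; exact Real.rpow_lt_one (le_of_lt hx0) hx1 (by positivity)
    have hmem : -Real.log (1 - y) / x ∈ ((fun x : ℝ =>
        -Real.log (1 - x ^ ((1 : ℝ) / ((ℓ : ℝ) - 1))) / x) '' Set.Ioo 0 1) :=
      ⟨x, ⟨hx0, hx1⟩, rfl⟩
    have hlx : lam < -Real.log (1 - y) / x := lt_of_lt_of_le hlt (csInf_le hbdd hmem)
    have hlog : Real.log (1 - y) < -lam * x := by
      rw [lt_div_iff₀ hx0] at hlx; nlinarith
    have h1y : 1 - y < Real.exp (-lam * x) := by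
      calc 1 - y = Real.exp (Real.log (1 - y)) := (Real.exp_log (by linarith)).symm
        _ < Real.exp (-lam * x) := Real.exp_lt_exp.mpr hlog
    have hbase : 1 - Real.exp (-lam * x) < y := by linarith
    have hbase0 : 0 ≤ 1 - Real.exp (-lam * x) := by
      have : Real.exp (-lam * x) ≤ 1 := Real.exp_le_one_iff.mpr (by nlinarith)
      linarith
    have hpow : (1 - Real.exp (-lam * x)) ^ k < y ^ k :=
      pow_lt_pow_left₀ hbase hbase0 (by omega)
    have hyk : y ^ k = x := by
      rw [hy, hkcast, ← Real.rpow_natCast (x ^ ((1:ℝ)/(k:ℝ))) k,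
        ← Real.rpow_mul (le_of_lt hx0)]
      rw [one_div, inv_mul_cancel₀ (ne_of_gt hkpos), Real.rpow_one]
    rw [hfdef]; dsimp only; rw [hyk] at hpow; exact hpow
  -- bounds: 0 ≤ p j ≤ 1
  have hbounds : ∀ j, 0 ≤ p j ∧ p j ≤ 1 := by
    intro j
    induction j with
    | zero => rw [hp0]; exact ⟨zero_le_one, le_refl 1⟩
    | succ n ih =>
      have hexp1 : Real.exp (-lam * p n) ≤ 1 :=
        Real.exp_le_one_iff.mpr (by nlinarith [ih.1])
      have hexp0 : 0 < Real.exp (-lam * p n) := Real.exp_pos _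
      constructor
      · rw [hrec n]; exact pow_nonneg (by linarith) k
      · rw [hrec n]
        exact pow_le_one₀ (by linarith) (by linarith)
  -- f monotone on [0,∞)
  have hmono : ∀ a b : ℝ, 0 ≤ a → a ≤ b → f a ≤ f b := by
    intro a b ha hab
    have h1 : Real.exp (-lam * b) ≤ Real.exp (-lam * a) :=
      Real.exp_le_exp.mpr (by nlinarith)
    have h2 : 0 ≤ 1 - Real.exp (-lam * a) := by
      have : Real.exp (-lam * a) ≤ 1 := Real.exp_le_one_iff.mpr (by nlinarith)
      linarith
    exact pow_le_pow_left₀ h2 (by linarith) k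
  -- antitone
  have hanti : ∀ j, p (j + 1) ≤ p j := by
    intro j
    induction j with
    | zero =>
      rw [hrec 0, hp0]
      have hexp0 : 0 < Real.exp (-lam * 1) := Real.exp_pos _
      have hexp1 : Real.exp (-lam * 1) ≤ 1 :=
        Real.exp_le_one_iff.mpr (by nlinarith)
      exact pow_le_one₀ (by linarith) (by linarith)
    | succ n ih =>
      calc p (n+1+1) = f (p (n+1)) := hrec (n+1)
        _ ≤ f (p n) := hmono _ _ (hbounds (n+1)).1 ih
        _ = p (n+1) := (hrec n).symm
  have hAnti : Antitone p := antitone_nat_of_succ_le hanti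
  have hBdd : BddBelow (Set.range p) := ⟨0, fun v hv => by
    obtain ⟨j, rfl⟩ := hv; exact (hbounds j).1⟩
  have htend : Filter.Tendsto p Filter.atTop (nhds (⨅ j, p j)) :=
    tendsto_atTop_ciInf hAnti hBdd
  set L := ⨅ j, p j with hL
  have hL0 : 0 ≤ L := le_ciInf fun j => (hbounds j).1
  have hL1 : L < 1 := by
    have h1 : L ≤ p 1 := ciInf_le hBdd 1
    have h2 : p 1 < 1 := by
      rw [hrec 0, hp0]
      have hexp0 : 0 < Real.exp (-lam * 1) := Real.exp_pos _
      have hexp1 : Real.exp (-lam * 1) < 1 := by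
        rw [Real.exp_lt_one_iff]; nlinarith
      exact pow_lt_one₀ (by linarith) (by linarith) (by omega)
    linarith
  -- fixed point
  have hcf : Continuous f := by
    apply Continuous.pow
    exact continuous_const.sub ((continuous_const.mul continuous_id).rexp)
  have ht1 : Filter.Tendsto (fun j => p (j + 1)) Filter.atTop (nhds L) :=
    htend.comp (tendsto_add_atTop_nat 1)
  have ht2 : Filter.Tendsto (fun j => f (p j)) Filter.atTop (nhds (f L)) :=
    (hcf.continuousAt.tendsto).comp htend
  have heq : (fun j => p (j + 1)) = fun j => f (p j) := by
    funext j; rw [hrec j]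
  have hfix : f L = L := by
    rw [heq] at ht1
    exact tendsto_nhds_unique ht2 ht1
  have hLzero : L = 0 := by
    by_contra h
    have hLpos : 0 < L := lt_of_le_of_ne hL0 (Ne.symm h)
    have := hkey L ⟨hLpos, hL1⟩
    linarith [hfix ▸ this]
  rw [← hLzero]; exact htend
end
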